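/- arXiv:1606.05379 — 5 statements merged into one kernel-verified Lean document; each statement's English description precedes it below -/
import Mathlib

section
/- If a normal topological space X is the union of a sequence of open subsets U_1, U_2, U_3, ... such that for each n ≥ 1, the closure of U_n is contained in U_{n+1} and U_n contracts to a point in U_{n+1} (i.e., the inclusion U_n ↪ U_{n+1} is homotopic to a constant map), then X is contractible. -/
/-!
Fix `p ∈ U 1`. Stage `n` deforms the current map `rₙ`, which already equals `p` on
`closure (U n)`, into a map equal to `p` on `closure (U (n + 1))`: off `closure (U n)` it
contracts `rₙ x` inside `U (n + 3)` to the centre of that contraction and then follows the track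
of `p` back to `p`, damped by a Urysohn function that vanishes outside `U (n + 2)`. On
`closure (U n)` this would send `p` out and back along its own track, a loop that can instead
be shrunk to `p` continuously; shrinking it completely on `closure (U (n - 1))` makes stage `n`
constant there. Running stage `n` during `[n, n + 1]` and compressing `[0, ∞]` to `[0, 1]` gives
a contraction of `X`; it is continuous at time `1` because every point lies in some open `U m`,
on which all stages after the `m`-th are constant.
-/

open unitInterval Set Filter Topology Function

section Concatenation

variable {X Y : Type*}

lemma locallyFinite_Icc_natCast : LocallyFinite fun k : ℕ => Icc (k : ℝ) (k + 1) := by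
  intro t
  refine ⟨Iio (t + 1), Iio_mem_nhds (lt_add_one t), (finite_lt_nat ⌈t + 1⌉₊).subset ?_⟩
  rintro k ⟨s, ⟨hks, -⟩, hst : s < t + 1⟩
  exact Nat.lt_ceil.2 (hks.trans_lt hst)

noncomputable def concatChain (H : ℕ → X → ℝ → Y) (q : X × ℝ) : Y :=
  H ⌊q.2⌋₊ q.1 (q.2 - ⌊q.2⌋₊)

variable {H : ℕ → X → ℝ → Y}

lemma concatChain_eq_of_mem_Icc (hchain : ∀ n x, H n x 1 = H (n + 1) x 0) (x : X) {k : ℕ}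
    {t : ℝ} (ht : t ∈ Icc (k : ℝ) (k + 1)) : concatChain H (x, t) = H k x (t - k) := by
  rcases ht.2.eq_or_lt with rfl | hlt
  · rw [concatChain, ← Nat.cast_succ, Nat.floor_natCast, sub_self, ← hchain, Nat.cast_succ,
      add_sub_cancel_left]
  · rw [concatChain, (Nat.floor_eq_iff (k.cast_nonneg.trans ht.1)).2 ⟨ht.1, hlt⟩]

lemma concatChain_eq_of_le {p : Y} {x : X} {m : ℕ}
    (hp : ∀ n ≥ m, ∀ s ∈ Icc (0 : ℝ) 1, H n x s = p) {t : ℝ} (ht : (m : ℝ) ≤ t) :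
    concatChain H (x, t) = p := by
  have ht0 : 0 ≤ t := m.cast_nonneg.trans ht
  refine hp _ (Nat.le_floor ht) _ ⟨sub_nonneg.2 (Nat.floor_le ht0), ?_⟩
  linarith [Nat.lt_floor_add_one t]

variable [TopologicalSpace X] [TopologicalSpace Y]

lemma continuousOn_concatChain (hH : ∀ n, Continuous (uncurry (H n)))
    (hchain : ∀ n x, H n x 1 = H (n + 1) x 0) :
    ContinuousOn (concatChain H) (Prod.snd ⁻¹' Ici 0) := by
  have hcover :
      (Prod.snd ⁻¹' Ici 0 : Set (X × ℝ)) = ⋃ k : ℕ, Prod.snd ⁻¹' Icc (k : ℝ) (k + 1) := by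
    ext ⟨x, t⟩
    simp only [mem_preimage, mem_Ici, mem_iUnion, mem_Icc]
    refine ⟨fun ht => ⟨⌊t⌋₊, Nat.floor_le ht, (Nat.lt_floor_add_one t).le⟩, ?_⟩
    rintro ⟨k, hk, -⟩
    exact k.cast_nonneg.trans hk
  rw [hcover]
  refine (locallyFinite_Icc_natCast.preimage_continuous continuous_snd).continuousOn_iUnion
    (fun k => isClosed_Icc.preimage continuous_snd) fun k => ?_
  refine ((hH k).comp (by fun_prop : Continuous fun q : X × ℝ => (q.1, q.2 - k))).continuousOn
    |>.congr fun q hq => ?_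
  exact concatChain_eq_of_mem_Icc hchain q.1 hq

variable (H) in
noncomputable def compressChain (p : Y) (q : I × X) : Y :=
  if (q.1 : ℝ) < 1 then concatChain H (q.2, q.1 / (1 - q.1)) else p

lemma continuous_compressChain (hH : ∀ n, Continuous (uncurry (H n)))
    (hchain : ∀ n x, H n x 1 = H (n + 1) x 0) {p : Y}
    (hp : ∀ x, ∃ O ∈ 𝓝 x, ∃ m, ∀ n ≥ m, ∀ y ∈ O, ∀ s ∈ Icc (0 : ℝ) 1, H n y s = p) :
    Continuous (compressChain H p) := by
  refine continuous_iff_continuousAt.2 fun ⟨τ, x⟩ => ?_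
  rcases τ.2.2.lt_or_eq with hτ | hτ
  · have hopen : IsOpen {q : I × X | (q.1 : ℝ) < 1} := isOpen_lt (by fun_prop) (by fun_prop)
    have hG : ContinuousOn (fun q : I × X => concatChain H (q.2, q.1 / (1 - q.1)))
        {q | (q.1 : ℝ) < 1} := by
      refine (continuousOn_concatChain hH hchain).comp ?_ fun q hq => ?_
      · refine continuousOn_snd.prodMk (ContinuousOn.div (by fun_prop) (by fun_prop) ?_)
        exact fun q hq => (sub_pos.2 hq).ne'
      · exact div_nonneg q.1.2.1 (sub_pos.2 hq).le
    exact (hG.continuousAt (hopen.mem_nhds hτ)).congr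
      (eventuallyEq_of_mem (hopen.mem_nhds hτ) fun q hq => (if_pos hq).symm)
  · obtain ⟨O, hO, m, hm⟩ := hp x
    have hnear : ∀ᶠ q : I × X in 𝓝 (τ, x), (m : ℝ) / (m + 1) < q.1 ∧ q.2 ∈ O := by
      refine (continuous_subtype_val.comp continuous_fst).continuousAt.eventually
        (lt_mem_nhds ?_) |>.and (continuous_snd.continuousAt.eventually hO)
      rw [comp_apply, hτ, div_lt_one (by positivity)]
      exact lt_add_one _
    rw [ContinuousAt, compressChain, if_neg hτ.not_lt]
    refine tendsto_const_nhds.congr' (hnear.mono fun q ⟨hq, hqO⟩ => ?_)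
    rw [compressChain]
    split_ifs with h1
    · refine (concatChain_eq_of_le (fun n hn y => hm n hn _ hqO y) ?_).symm
      rw [le_div_iff₀ (sub_pos.2 h1)]
      rw [div_lt_iff₀ (by positivity)] at hq
      linarith
    · rfl

theorem homotopic_const_of_chain (H : ℕ → X → ℝ → Y)
    (hH : ∀ n, Continuous (uncurry (H n))) (hchain : ∀ n x, H n x 1 = H (n + 1) x 0)
    (g : C(X, Y)) (hg : ∀ x, H 0 x 0 = g x) (p : Y)
    (hp : ∀ x, ∃ O ∈ 𝓝 x, ∃ m, ∀ n ≥ m, ∀ y ∈ O, ∀ s ∈ Icc (0 : ℝ) 1, H n y s = p) :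
    g.Homotopic (ContinuousMap.const X p) := by
  refine ⟨⟨⟨compressChain H p, continuous_compressChain hH hchain hp⟩, fun x => ?_,
    fun x => if_neg (by simp)⟩⟩
  change compressChain H p (0, x) = g x
  rw [compressChain, if_pos (by simp), Icc.coe_zero, zero_div,
    concatChain_eq_of_mem_Icc hchain x (k := 0) (by simp), Nat.cast_zero, sub_zero, hg]

end Concatenation

section OutAndBack

variable {Y : Type*} {W W' : Set Y} (f : W × I → Y) (p : Y)

open Classical in
noncomputable def timeExtend (y : Y) (t : ℝ) : Y :=
  if h : y ∈ W then f (⟨y, h⟩, projIcc 0 1 zero_le_one t) else y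

/-- A homotopy from the inclusion of `W` to the constant map `p`, through the common endpoint of
`f`. At `p` itself it runs the track of `p` out and back. -/
noncomputable def outBack (y : Y) (s : ℝ) : Y :=
  if s ≤ 1 / 2 then timeExtend f y (2 * s) else timeExtend f p (2 - 2 * s)

variable {f p}

lemma timeExtend_of_nonpos (hf0 : ∀ y, f (y, 0) = y) (y : Y) {t : ℝ} (ht : t ≤ 0) :
    timeExtend f y t = y := by
  unfold timeExtend
  split_ifs with h
  · rw [projIcc_of_le_left _ ht]
    exact hf0 ⟨y, h⟩
  · rfl

lemma timeExtend_mem (hfW' : ∀ z, f z ∈ W') {y : Y} (hy : y ∈ W) (t : ℝ) :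
    timeExtend f y t ∈ W' := by
  rw [timeExtend, dif_pos hy]
  exact hfW' _

lemma timeExtend_one_eq (hf1 : ∀ y y', f (y, 1) = f (y', 1)) {y y' : Y} (hy : y ∈ W)
    (hy' : y' ∈ W) : timeExtend f y 1 = timeExtend f y' 1 := by
  simp only [timeExtend, dif_pos hy, dif_pos hy', projIcc_right]
  exact hf1 _ _

lemma outBack_of_nonpos (hf0 : ∀ y, f (y, 0) = y) (y : Y) {s : ℝ} (hs : s ≤ 0) :
    outBack f p y s = y := by
  rw [outBack, if_pos (by linarith), timeExtend_of_nonpos hf0 y (by linarith)]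

lemma outBack_one (hf0 : ∀ y, f (y, 0) = y) (y : Y) : outBack f p y 1 = p := by
  rw [outBack, if_neg (by norm_num), timeExtend_of_nonpos hf0 p (by norm_num)]

lemma outBack_min_sub (s : ℝ) : outBack f p p (min s (1 - s)) = outBack f p p s := by
  unfold outBack
  rcases le_total s (1 - s) with h | h
  · rw [min_eq_left h]
  · rw [min_eq_right h, if_pos (by linarith)]
    split_ifs with hs
    · congr 1; linarith
    · congr 1; ring

lemma outBack_mem (hfW' : ∀ z, f z ∈ W') (hp : p ∈ W) {y : Y} (hy : y ∈ W) (s : ℝ) :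
    outBack f p y s ∈ W' := by
  unfold outBack
  split_ifs
  exacts [timeExtend_mem hfW' hy _, timeExtend_mem hfW' hp _]

variable [TopologicalSpace Y]

lemma continuousOn_timeExtend (hf : Continuous f) :
    ContinuousOn (uncurry (timeExtend f)) (W ×ˢ univ) := by
  rw [continuousOn_iff_continuous_domRestrict]
  refine (hf.comp (f := fun q : ↥(W ×ˢ univ) =>
    ((⟨q.1.1, q.2.1⟩ : W), projIcc 0 1 zero_le_one q.1.2)) (by fun_prop)).congr fun q => ?_
  change _ = timeExtend f q.1.1 q.1.2
  rw [timeExtend, dif_pos q.2.1]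
  rfl

lemma continuousOn_outBack (hf : Continuous f) (hf1 : ∀ y y', f (y, 1) = f (y', 1))
    (hp : p ∈ W) : ContinuousOn (uncurry (outBack f p)) (W ×ˢ univ) := by
  have hte := continuousOn_timeExtend hf
  refine ContinuousOn.if (fun q hq => ?_) ?_ ?_
  · have hq2 : q.2 = 1 / 2 := frontier_le_subset_eq continuous_snd continuous_const hq.2
    convert timeExtend_one_eq hf1 hq.1.1 hp using 2 <;> rw [hq2] <;> norm_num
  · exact hte.comp (f := fun q : Y × ℝ => (q.1, 2 * q.2)) (by fun_prop)
      fun q hq => ⟨hq.1.1, trivial⟩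
  · exact hte.comp (f := fun q : Y × ℝ => (p, 2 - 2 * q.2)) (by fun_prop)
      fun _ _ => ⟨hp, trivial⟩

end OutAndBack

section Stage

variable {X Y : Type*} {W W' : Set Y} {f : W × I → Y} {p : Y}

lemma continuous_damped [TopologicalSpace X] [TopologicalSpace Y] (hW : IsOpen W)
    {C : Y → ℝ → Y} (hC : ContinuousOn (uncurry C) (W ×ˢ univ)) (hC0 : ∀ y, C y 0 = y)
    {r : X → Y} (hr : Continuous r) {ν : X → ℝ} (hν : Continuous ν)
    (hsupp : tsupport ν ⊆ r ⁻¹' W) : Continuous fun q : X × ℝ => C (r q.1) (q.2 * ν q.1) := by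
  refine continuous_iff_continuousAt.2 fun ⟨x, s⟩ => ?_
  by_cases hx : r x ∈ W
  · have hCx : ContinuousAt (uncurry C) (r x, s * ν x) :=
      hC.continuousAt (prod_mem_nhds (hW.mem_nhds hx) univ_mem)
    exact hCx.comp (f := fun q : X × ℝ => (r q.1, q.2 * ν q.1)) (x := (x, s)) (by fun_prop)
  · have hν0 : ∀ᶠ q : X × ℝ in 𝓝 (x, s), ν q.1 = 0 :=
      continuous_fst.continuousAt.eventually
        (notMem_tsupport_iff_eventuallyEq.1 fun h => hx (hsupp h))
    refine (hr.comp continuous_fst).continuousAt.congr (hν0.mono fun q hq => ?_)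
    simp [hq, hC0]

variable (f p) in
open Classical in
/-- On `K`, where `r = p`, the loop that `outBack` runs at `p` is shrunk by the factor `μ`;
where `μ = ν = 1` the two branches agree by `outBack_min_sub`. -/
noncomputable def stage (K : Set X) (μ ν : X → ℝ) (r : X → Y) (x : X) (s : ℝ) : Y :=
  if x ∈ K then outBack f p p (μ x * min s (1 - s)) else outBack f p (r x) (s * ν x)

variable {K : Set X} {μ ν : X → ℝ} {r : X → Y}

lemma stage_zero (hf0 : ∀ y, f (y, 0) = y) (hrK : ∀ x ∈ K, r x = p) (x : X) :
    stage f p K μ ν r x 0 = r x := by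
  unfold stage
  split_ifs with hx
  · rw [outBack_of_nonpos hf0 p (by simp), hrK x hx]
  · rw [outBack_of_nonpos hf0 _ (by simp)]

lemma stage_one (hf0 : ∀ y, f (y, 0) = y) {x : X} (hx : x ∈ K ∨ ν x = 1) :
    stage f p K μ ν r x 1 = p := by
  unfold stage
  split_ifs with hxK
  · exact outBack_of_nonpos hf0 p (by simp)
  · rw [hx.resolve_left hxK, one_mul, outBack_one hf0]

lemma stage_of_mem_of_eq_zero (hf0 : ∀ y, f (y, 0) = y) {x : X} (hx : x ∈ K) (hμ : μ x = 0)
    (s : ℝ) : stage f p K μ ν r x s = p := by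
  rw [stage, if_pos hx, hμ, zero_mul, outBack_of_nonpos hf0 p le_rfl]

lemma stage_eq_or_mem [TopologicalSpace X] (hf0 : ∀ y, f (y, 0) = y)
    (hfW' : ∀ z, f z ∈ W') (hp : p ∈ W) (hsupp : tsupport ν ⊆ r ⁻¹' W) (x : X) (s : ℝ) :
    stage f p K μ ν r x s = r x ∨ stage f p K μ ν r x s ∈ W' := by
  unfold stage
  split_ifs with hxK
  · exact .inr (outBack_mem hfW' hp hp _)
  by_cases hx : r x ∈ W
  · exact .inr (outBack_mem hfW' hp hx _)
  · have hν : ν x = 0 := image_eq_zero_of_notMem_tsupport fun h => hx (hsupp h)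
    exact .inl (by rw [hν, mul_zero, outBack_of_nonpos hf0 _ le_rfl])

lemma continuous_stage [TopologicalSpace X] [TopologicalSpace Y] (hW : IsOpen W)
    (hf : Continuous f) (hf0 : ∀ y, f (y, 0) = y) (hf1 : ∀ y y', f (y, 1) = f (y', 1))
    (hp : p ∈ W) (hK : IsClosed K) (hr : Continuous r) (hrK : ∀ x ∈ K, r x = p)
    (hμ : Continuous μ) (hν : Continuous ν) (hμ1 : ∀ x ∈ frontier K, μ x = 1)
    (hν1 : ∀ x ∈ frontier K, ν x = 1) (hsupp : tsupport ν ⊆ r ⁻¹' W) :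
    Continuous (uncurry (stage f p K μ ν r)) := by
  classical
  have hC := continuousOn_outBack hf hf1 hp
  refine Continuous.if (fun q hq => ?_) ?_
    (continuous_damped hW hC (fun y => outBack_of_nonpos hf0 y le_rfl) hr hν hsupp)
  · have hq1 : q.1 ∈ frontier K := continuous_fst.frontier_preimage_subset K hq
    rw [hμ1 _ hq1, hν1 _ hq1, one_mul, mul_one, hrK _ (hK.frontier_subset hq1), outBack_min_sub]
  · exact hC.comp_continuous (f := fun q : X × ℝ => (p, μ q.1 * min q.2 (1 - q.2)))
      (by fun_prop) fun _ => ⟨hp, trivial⟩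

end Stage

section Exhaustion

variable {X : Type*} [TopologicalSpace X]

structure ContractingExhaustion (U : ℕ → Set X) (f : ∀ n, U n × I → X) (p : X)
    (ρ : ℕ → X → ℝ) : Prop where
  isOpen : ∀ n, IsOpen (U n)
  closure_subset : ∀ n, closure (U n) ⊆ U (n + 1)
  continuous_contraction : ∀ n, Continuous (f n)
  contraction_zero : ∀ n x, f n (x, 0) = x
  contraction_one : ∀ n x y, f n (x, 1) = f n (y, 1)
  contraction_mem : ∀ n z, f n z ∈ U (n + 1)
  mem_one : p ∈ U 1
  continuous_ramp : ∀ k, Continuous (ρ k)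
  ramp_one : ∀ k, EqOn (ρ k) 1 (closure (U k))
  ramp_zero : ∀ k, EqOn (ρ k) 0 (U (k + 1))ᶜ

namespace ContractingExhaustion

variable (U : ℕ → Set X) (f : ∀ n, U n × I → X) (p : X) (ρ : ℕ → X → ℝ)

def settledSet (n : ℕ) : Set X := if n = 0 then ∅ else closure (U n)

/-- For `n = 0` the set `settledSet U 0` is empty, so the junk value `ρ (0 - 1) = ρ 0` plays no
role. -/
noncomputable def stageMap (n : ℕ) (r : X → X) : X → ℝ → X :=
  stage (f (n + 3)) p (settledSet U n) (fun x => 1 - ρ (n - 1) x) (ρ (n + 1)) r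

noncomputable def seqMap : ℕ → X → X
  | 0 => id
  | n + 1 => fun x => stageMap U f p ρ n (seqMap n) x 1

variable {U f p ρ}

lemma isClosed_settledSet (n : ℕ) : IsClosed (settledSet U n) := by
  unfold settledSet
  split_ifs
  exacts [isClosed_empty, isClosed_closure]

variable (h : ContractingExhaustion U f p ρ)
include h

lemma monotone : Monotone U :=
  monotone_nat_of_le_succ fun n => subset_closure.trans (h.closure_subset n)

lemma tsupport_ramp_subset (k : ℕ) : tsupport (ρ k) ⊆ U (k + 2) := by
  refine (closure_mono fun x hx => ?_).trans (h.closure_subset (k + 1))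
  by_contra hxU
  exact hx (h.ramp_zero k hxU)

lemma frontier_settledSet {n : ℕ} {x : X} (hx : x ∈ frontier (settledSet U n)) :
    ρ (n - 1) x = 0 ∧ ρ (n + 1) x = 1 := by
  obtain ⟨n, rfl⟩ : ∃ m, n = m + 1 := by
    rcases n with _ | m
    · simp [settledSet] at hx
    · exact ⟨m, rfl⟩
  rw [settledSet, if_neg n.succ_ne_zero] at hx
  have hxU : x ∉ U (n + 1) := fun hxU =>
    hx.2 (interior_maximal subset_closure (h.isOpen _) hxU)
  exact ⟨h.ramp_zero n hxU, h.ramp_one _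
    (closure_mono (h.monotone (n + 1).le_succ) (isClosed_closure.frontier_subset hx))⟩

lemma seqMap_eq_of_mem_settledSet {n : ℕ} {x : X} (hx : x ∈ settledSet U n) :
    seqMap U f p ρ n x = p := by
  rcases n with _ | n
  · simp [settledSet] at hx
  · rw [settledSet, if_neg n.succ_ne_zero] at hx
    rw [seqMap, stageMap]
    exact stage_one (h.contraction_zero _) (.inr (h.ramp_one _ hx))

lemma tsupport_ramp_subset_preimage {n : ℕ}
    (hn : ∀ x, seqMap U f p ρ n x = x ∨ seqMap U f p ρ n x ∈ U (n + 3)) :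
    tsupport (ρ (n + 1)) ⊆ seqMap U f p ρ n ⁻¹' U (n + 3) := fun x hx => by
  have hxU := h.tsupport_ramp_subset _ hx
  rcases hn x with hx' | hx'
  · rwa [mem_preimage, hx']
  · exact hx'

lemma seqMap_eq_or_mem (n : ℕ) (x : X) :
    seqMap U f p ρ n x = x ∨ seqMap U f p ρ n x ∈ U (n + 3) := by
  induction n generalizing x with
  | zero => exact .inl rfl
  | succ n ih =>
    have hp : p ∈ U (n + 3) := h.monotone (by omega) h.mem_one
    rw [seqMap, stageMap]
    rcases stage_eq_or_mem (h.contraction_zero _) (h.contraction_mem _) hp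
      (h.tsupport_ramp_subset_preimage ih) x 1 with hx | hx
    · rcases ih x with hx' | hx'
      · exact .inl (hx.trans hx')
      · exact .inr (h.monotone (by omega) (hx ▸ hx'))
    · exact .inr hx

lemma continuous_stageMap {n : ℕ} (hr : Continuous (seqMap U f p ρ n)) :
    Continuous (uncurry (stageMap U f p ρ n (seqMap U f p ρ n))) :=
  continuous_stage (h.isOpen _) (h.continuous_contraction _) (h.contraction_zero _)
    (h.contraction_one _) (h.monotone (by omega) h.mem_one) (isClosed_settledSet n) hr
    (fun _ => h.seqMap_eq_of_mem_settledSet) (continuous_const.sub (h.continuous_ramp _))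
    (h.continuous_ramp _) (fun x hx => by simp [(h.frontier_settledSet hx).1])
    (fun x hx => (h.frontier_settledSet hx).2)
    (h.tsupport_ramp_subset_preimage (h.seqMap_eq_or_mem n))

lemma continuous_seqMap (n : ℕ) : Continuous (seqMap U f p ρ n) := by
  induction n with
  | zero => exact continuous_id
  | succ n ih => exact (h.continuous_stageMap ih).comp (continuous_id.prodMk continuous_const)

lemma stageMap_seqMap_zero (n : ℕ) (x : X) :
    stageMap U f p ρ n (seqMap U f p ρ n) x 0 = seqMap U f p ρ n x :=
  stage_zero (h.contraction_zero _) (fun _ => h.seqMap_eq_of_mem_settledSet) x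

lemma stageMap_eq_of_mem {m n : ℕ} (hmn : m < n) {x : X} (hx : x ∈ U m) (r : X → X) (s : ℝ) :
    stageMap U f p ρ n r x s = p := by
  have hxn : x ∈ closure (U (n - 1)) := subset_closure (h.monotone (by omega) hx)
  refine stage_of_mem_of_eq_zero (h.contraction_zero _) ?_ (by simp [h.ramp_one _ hxn]) s
  rw [settledSet, if_neg (by omega)]
  exact closure_mono (h.monotone (by omega)) hxn

theorem contractibleSpace (hcov : ∀ x, ∃ m, x ∈ U m) : ContractibleSpace X := by
  rw [contractible_iff_id_nullhomotopic]
  refine ⟨p, homotopic_const_of_chain (fun n => stageMap U f p ρ n (seqMap U f p ρ n))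
    (fun n => h.continuous_stageMap (h.continuous_seqMap n))
    (fun n x => (h.stageMap_seqMap_zero (n + 1) x).symm) _ (h.stageMap_seqMap_zero 0) p
    fun x => ?_⟩
  obtain ⟨m, hm⟩ := hcov x
  exact ⟨U m, (h.isOpen m).mem_nhds hm, m + 1,
    fun n hn y hy s _ => h.stageMap_eq_of_mem (by omega) hy _ s⟩

end ContractingExhaustion

end Exhaustion

/-- **Theorem 1.** If a normal space `X` is the union of a sequence of open subsets `{Uₙ}`
such that `cl(Uₙ) ⊆ Uₙ₊₁` and `Uₙ` contracts to a point in `Uₙ₊₁` for each `n`, then `X`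
is contractible. -/
theorem monotone_union_contractible
    {X : Type*} [TopologicalSpace X] [NormalSpace X]
    (U : ℕ → Set X) (hopen : ∀ n, IsOpen (U n))
    (hcl : ∀ n, closure (U n) ⊆ U (n + 1))
    (hunion : (⋃ n, U n) = Set.univ)
    (hcontr : ∀ n, ∃ f : (U n) × I → X, Continuous f ∧
      (∀ x : U n, f (x, 0) = (x : X)) ∧
      (∃ p ∈ U (n + 1), ∀ x : U n, f (x, 1) = p) ∧
      (∀ z, f z ∈ U (n + 1))) :
    ContractibleSpace X := by
  choose f hf hf0 hf1 hfU using hcontr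
  obtain ⟨p, hp, -⟩ := hf1 0
  choose ρ hρ0 hρ1 _ using fun k => exists_continuous_zero_one_of_isClosed
    (hopen (k + 1)).isClosed_compl isClosed_closure (disjoint_compl_left_iff_subset.2 (hcl k))
  have h : ContractingExhaustion U f p fun k => ρ k :=
    { isOpen := hopen
      closure_subset := hcl
      continuous_contraction := hf
      contraction_zero := hf0
      contraction_one := fun n x y => by
        obtain ⟨c, -, hc⟩ := hf1 n
        rw [hc, hc]
      contraction_mem := hfU
      mem_one := hp
      continuous_ramp := fun k => (ρ k).continuous
      ramp_one := hρ1
      ramp_zero := hρ0 }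
  exact h.contractibleSpace fun x => mem_iUnion.1 (hunion ▸ mem_univ x)
end

section
/- If a normal space X is the union of a sequence of open subsets U_1, U_2, ... and there is a point p_0 ∈ U_1 such that for each n ≥ 1, cl(U_n) ⊆ U_{n+1} and U_n contracts to p_0 in U_{n+1} fixing p_0, then X is contractible. -/
open unitInterval Set Filter Topology

/-!
Using an Urysohn function, thicken the contraction of `U (2n+1)` into a homotopy `h n` of all of
`X` that is the identity off `U (2n+1)`, moves points only inside `U (2n+2)`, and collapses
`closure (U (2n))` to `p₀`. Run `h 0, h 1, …` one after another, `h n` during the time interval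
`[n, n+1]`. The first `N` stages keep a point of `U (2N)` inside `U (2N)`, stage `N` sends it to
`p₀`, and it stays there from then on, because every `h n` fixes `p₀`. So the homotopy is
eventually constant on each open set `U (2N)`, and compressing `[0, ∞]` to `[0, 1]` turns it into a
contraction of `X`.
-/

theorem exists_global_homotopy_of_isClosed_subset {X : Type*} [TopologicalSpace X]
    [NormalSpace X] {A V : Set X} (hA : IsClosed A) (hV : IsOpen V) (hAV : A ⊆ V)
    {f : V × I → X} (hf : Continuous f) (hf₀ : ∀ x, f (x, 0) = x) :
    ∃ g : X × I → X, Continuous g ∧ (∀ x, g (x, 0) = x) ∧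
      (∀ x (hx : x ∈ A), g (x, 1) = f (⟨x, hAV hx⟩, 1)) ∧
      (∀ x t, x ∉ V → g (x, t) = x) ∧
      ∀ x (hx : x ∈ V) t, ∃ s, g (x, t) = f (⟨x, hx⟩, s) := by
  classical
  obtain ⟨W, hWo, hAW, hWV⟩ := normal_exists_closure_subset hA hV hAV
  obtain ⟨φ, hφW, hφA, hφI⟩ := exists_continuous_zero_one_of_isClosed hWo.isClosed_compl hA
    (disjoint_compl_left.mono_right hAW)
  -- `g` runs `f` at the speed `φ`, which is `1` on `A` and vanishes off `W`.
  let ψ : X → I := fun x => ⟨φ x, hφI x⟩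
  have hψ : Continuous ψ := φ.continuous.subtype_mk hφI
  let g : X × I → X := fun z => if hz : z.1 ∈ V then f (⟨z.1, hz⟩, ψ z.1 * z.2) else z.1
  have hg_of_notMem : ∀ z : X × I, z.1 ∉ closure W → g z = z.1 := by
    rintro ⟨x, t⟩ hx
    by_cases hxV : x ∈ V
    · have hψx : ψ x = 0 := Subtype.ext (hφW fun hxW => hx (subset_closure hxW))
      simp [g, hxV, hψx, hf₀]
    · exact dif_neg hxV
  have hg_on_V : ContinuousOn g (V ×ˢ univ) := by
    rw [continuousOn_iff_continuous_domRestrict]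
    convert hf.comp (((continuous_fst.comp continuous_subtype_val).subtype_mk
      fun z : ↥(V ×ˢ univ) => z.2.1).prodMk
        (((hψ.comp continuous_fst).mul continuous_snd).comp continuous_subtype_val)) using 1
    exact funext fun z => dif_pos z.2.1
  have hg_off_W : ContinuousOn g ((closure W)ᶜ ×ˢ univ) :=
    continuous_fst.continuousOn.congr fun z hz => hg_of_notMem z hz.1
  refine ⟨g, ?_, fun x => ?_, fun x hx => ?_, fun x t hx => dif_neg hx,
    fun x hx t => ⟨_, dif_pos hx⟩⟩
  · have hcover : V ×ˢ univ ∪ (closure W)ᶜ ×ˢ univ = (univ : Set (X × I)) := by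
      rw [← union_prod, ← univ_prod_univ, compl_subset_iff_union.1 (compl_subset_compl.2 hWV)]
    rw [← continuousOn_univ, ← hcover]
    exact hg_on_V.union_of_isOpen hg_off_W (hV.prod isOpen_univ)
      (isClosed_closure.isOpen_compl.prod isOpen_univ)
  · by_cases hxV : x ∈ V
    · simp [g, hxV, hf₀]
    · exact dif_neg hxV
  · have hψx : ψ x = 1 := Subtype.ext (hφA hx)
    simp [g, hAV hx, hψx]

section SeqConcat

variable {Z Y : Type*}

/-- Runs `G n` during the time interval `[n, n + 1]`. -/
noncomputable def seqConcat (G : ℕ → Z × I → Y) (p : Z × ℝ) : Y :=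
  G ⌊p.2⌋₊ (p.1, projIcc 0 1 zero_le_one (p.2 - ⌊p.2⌋₊))

variable {G : ℕ → Z × I → Y}

theorem seqConcat_of_nonpos (z : Z) {s : ℝ} (hs : s ≤ 0) :
    seqConcat G (z, s) = G 0 (z, projIcc 0 1 zero_le_one s) := by
  simp [seqConcat, Nat.floor_of_nonpos hs]

theorem seqConcat_eq_of_mem_Icc (hG₀ : ∀ n z, G (n + 1) (z, 0) = G n (z, 1)) (z : Z) {n : ℕ}
    {s : ℝ} (hs : s ∈ Icc (n : ℝ) (n + 1)) :
    seqConcat G (z, s) = G n (z, projIcc 0 1 zero_le_one (s - n)) := by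
  obtain hlt | rfl := hs.2.lt_or_eq
  · rw [seqConcat, (Nat.floor_eq_iff ((Nat.cast_nonneg n).trans hs.1)).2 ⟨hs.1, hlt⟩]
  · have hfloor : ⌊(n : ℝ) + 1⌋₊ = n + 1 := by exact_mod_cast Nat.floor_natCast (n + 1)
    rw [seqConcat, hfloor, add_sub_cancel_left]
    push_cast
    simpa [projIcc_of_le_left] using hG₀ n z

theorem continuous_seqConcat [TopologicalSpace Z] [TopologicalSpace Y]
    (hG : ∀ n, Continuous (G n)) (hG₀ : ∀ n z, G (n + 1) (z, 0) = G n (z, 1)) :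
    Continuous (seqConcat G) := by
  have hpieces : LocallyFinite fun k : ℤ => (univ : Set Z) ×ˢ Icc (k : ℝ) (k + 1) :=
    (locallyFinite_Icc_of_tendsto tendsto_intCast_atTop_atTop
      (tendsto_atBot_add_const_right _ 1 (tendsto_intCast_atBot_iff.2 tendsto_id))).prod_left _
  have hcover : ⋃ k : ℤ, (univ : Set Z) ×ˢ Icc (k : ℝ) (k + 1) = univ := by
    refine eq_univ_of_forall fun p => mem_iUnion.2 ⟨⌊p.2⌋, trivial, Int.floor_le _, ?_⟩
    exact (Int.lt_floor_add_one _).le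
  refine hpieces.continuous hcover (fun k => isClosed_univ.prod isClosed_Icc) fun k => ?_
  have hcont : Continuous fun p : Z × ℝ =>
      G k.toNat (p.1, projIcc 0 1 zero_le_one (p.2 - k.toNat)) :=
    (hG _).comp (continuous_fst.prodMk (continuous_projIcc.comp (by fun_prop)))
  refine hcont.continuousOn.congr fun ⟨z, s⟩ ⟨_, hs⟩ => ?_
  rcases le_or_gt 0 k with hk | hk
  · lift k to ℕ using hk
    simpa using seqConcat_eq_of_mem_Icc hG₀ z (n := k) (by exact_mod_cast hs)
  · have hs₀ : s ≤ 0 := hs.2.trans (by exact_mod_cast hk)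
    simpa [Int.toNat_of_nonpos hk.le] using seqConcat_of_nonpos z hs₀

end SeqConcat

section SeqStage

variable {X : Type*} (h : ℕ → X × I → X)

def seqComp : ℕ → X → X
  | 0, x => x
  | n + 1, x => h n (seqComp n x, 1)

def seqStage (n : ℕ) (p : X × I) : X :=
  h n (seqComp h n p.1, p.2)

variable {h}

theorem seqStage_succ_zero (h₀ : ∀ n x, h n (x, 0) = x) (n : ℕ) (x : X) :
    seqStage h (n + 1) (x, 0) = seqStage h n (x, 1) :=
  h₀ _ _

theorem continuous_seqStage [TopologicalSpace X] (hc : ∀ n, Continuous (h n)) (n : ℕ) :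
    Continuous (seqStage h n) := by
  have hcomp : Continuous (seqComp h n) := by
    induction n with
    | zero => exact continuous_id
    | succ n ih => exact (hc n).comp (ih.prodMk continuous_const)
  exact (hc n).comp ((hcomp.comp continuous_fst).prodMk continuous_snd)

variable {V : ℕ → Set X} {p : X}

theorem seqComp_mem (hV : ∀ n m, n < m → ∀ z, z.1 ∈ V m → h n z ∈ V m) {N : ℕ} {x : X}
    (hx : x ∈ V N) {n : ℕ} (hn : n ≤ N) : seqComp h n x ∈ V N := by
  induction n with
  | zero => exact hx
  | succ n ih => exact hV n N hn _ (ih (Nat.le_of_succ_le hn))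

theorem seqComp_eq_of_mem (hV : ∀ n m, n < m → ∀ z, z.1 ∈ V m → h n z ∈ V m)
    (hkill : ∀ n x, x ∈ V n → h n (x, 1) = p) (hfix : ∀ n t, h n (p, t) = p) {N : ℕ} {x : X}
    (hx : x ∈ V N) {n : ℕ} (hn : N < n) : seqComp h n x = p := by
  induction n, hn using Nat.le_induction with
  | base => exact hkill N _ (seqComp_mem hV hx le_rfl)
  | succ n _ ih => exact ih ▸ hfix n 1

theorem seqStage_eq_of_mem (hV : ∀ n m, n < m → ∀ z, z.1 ∈ V m → h n z ∈ V m)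
    (hkill : ∀ n x, x ∈ V n → h n (x, 1) = p) (hfix : ∀ n t, h n (p, t) = p) {N : ℕ} {x : X}
    (hx : x ∈ V N) {n : ℕ} (hn : N < n) (t : I) : seqStage h n (x, t) = p := by
  rw [seqStage, seqComp_eq_of_mem hV hkill hfix hx hn, hfix]

end SeqStage

section CompressTime

variable {Z Y : Type*}

/-- Reparametrizes `[0, ∞)` as `[0, 1)` via `t ↦ t / (1 - t)`, with the value `c` at time `1`. -/
noncomputable def compressTime (F : Z × ℝ → Y) (c : Y) (p : Z × I) : Y :=
  if (p.2 : ℝ) < 1 then F (p.1, p.2 / (1 - p.2)) else c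

variable {F : Z × ℝ → Y} {c : Y}

theorem compressTime_zero (z : Z) : compressTime F c (z, 0) = F (z, 0) := by
  simp [compressTime]

theorem compressTime_one (z : Z) : compressTime F c (z, 1) = c := by
  simp [compressTime]

theorem continuous_compressTime [TopologicalSpace Z] [TopologicalSpace Y] (hF : Continuous F)
    (hc : ∀ z, ∀ᶠ q in 𝓝 z ×ˢ atTop, F q = c) : Continuous (compressTime F c) := by
  rw [continuous_iff_continuousAt]
  rintro ⟨z, t⟩
  rcases (le_one t).lt_or_eq with ht | ht
  · have hlt : ∀ᶠ q : Z × I in 𝓝 (z, t), (q.2 : ℝ) < 1 :=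
      (isOpen_lt (continuous_subtype_val.comp continuous_snd) continuous_const).mem_nhds ht
    refine ContinuousAt.congr ?_ (hlt.mono fun q hq => (if_pos hq).symm)
    refine hF.continuousAt.comp (continuousAt_fst.prodMk ?_)
    exact (continuous_subtype_val.comp continuous_snd).continuousAt.div
      (continuous_const.sub (continuous_subtype_val.comp continuous_snd)).continuousAt
      (sub_ne_zero.2 ht.ne')
  · obtain ⟨W, hW, S, hS, hWS⟩ := mem_prod_iff.1 (hc z)
    obtain ⟨T, hT⟩ := mem_atTop_sets.1 hS
    have hopen : IsOpen {u : I | max T 0 * (1 - u) < u} := isOpen_lt (by fun_prop) (by fun_prop)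
    refine (continuousAt_const (y := c)).congr ?_
    filter_upwards [prod_mem_nhds hW (hopen.mem_nhds (by simp [ht]))] with ⟨y, u⟩ ⟨hy, hu⟩
    rw [compressTime]
    split_ifs with hu₁
    · have hTu : max T 0 < u / (1 - u) := (lt_div_iff₀ (sub_pos.2 hu₁)).2 hu
      exact (hWS ⟨hy, hT _ ((le_max_left T 0).trans hTu.le)⟩).symm
    · rfl

end CompressTime

theorem exists_stage_homotopy {X : Type*} [TopologicalSpace X] [NormalSpace X]
    {U : ℕ → Set X} (hopen : ∀ n, IsOpen (U n)) (hcl : ∀ n, closure (U n) ⊆ U (n + 1))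
    {p₀ : X} (hp₀ : p₀ ∈ U 0) (n : ℕ)
    (hcontr : ∃ f : U (2 * n + 1) × I → X, Continuous f ∧
      (∀ x : U (2 * n + 1), f (x, 0) = (x : X)) ∧
      (∀ x : U (2 * n + 1), f (x, 1) = p₀) ∧
      (∀ (hp : p₀ ∈ U (2 * n + 1)) (t : I), f (⟨p₀, hp⟩, t) = p₀) ∧
      (∀ z, f z ∈ U (2 * n + 1 + 1))) :
    ∃ h : X × I → X, Continuous h ∧ (∀ x, h (x, 0) = x) ∧ (∀ x ∈ U (2 * n), h (x, 1) = p₀) ∧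
      (∀ t, h (p₀, t) = p₀) ∧ ∀ m, n < m → ∀ z : X × I, z.1 ∈ U (2 * m) → h z ∈ U (2 * m) := by
  obtain ⟨f, hf, hf₀, hf₁, hfp, hfU⟩ := hcontr
  have hmono : Monotone U := monotone_nat_of_le_succ fun n => subset_closure.trans (hcl n)
  obtain ⟨g, hg, hg₀, hg₁, hg_out, hg_in⟩ :=
    exists_global_homotopy_of_isClosed_subset isClosed_closure (hopen _) (hcl (2 * n)) hf hf₀
  refine ⟨g, hg, hg₀, fun x hx => (hg₁ x (subset_closure hx)).trans (hf₁ _), fun t => ?_,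
    fun m hm ⟨x, t⟩ hx => ?_⟩
  · obtain ⟨s, hs⟩ := hg_in p₀ (hmono (Nat.zero_le _) hp₀) t
    rw [hs, hfp]
  · by_cases hxV : x ∈ U (2 * n + 1)
    · obtain ⟨s, hs⟩ := hg_in x hxV t
      exact hs ▸ hmono (by omega) (hfU _)
    · exact (hg_out x t hxV).symm ▸ hx

/-- **Theorem 3.** If a normal space `X` is the union of a sequence of open subsets `{Uₙ}`
and there is a point `p₀ ∈ U₀` such that for each `n`, `cl(Uₙ) ⊆ Uₙ₊₁` and `Uₙ` contracts
to `p₀` in `Uₙ₊₁` fixing `p₀`, then `X` is contractible. -/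
theorem monotone_union_contractible_fixed_point
    {X : Type*} [TopologicalSpace X] [NormalSpace X]
    (U : ℕ → Set X) (hopen : ∀ n, IsOpen (U n))
    (hunion : (⋃ n, U n) = Set.univ)
    (p₀ : X) (hp₀ : p₀ ∈ U 0)
    (hcl : ∀ n, closure (U n) ⊆ U (n + 1))
    (hcontr : ∀ n, ∃ f : (U n) × I → X, Continuous f ∧
      (∀ x : U n, f (x, 0) = (x : X)) ∧
      (∀ x : U n, f (x, 1) = p₀) ∧
      (∀ (hp : p₀ ∈ U n) (t : I), f (⟨p₀, hp⟩, t) = p₀) ∧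
      (∀ z, f z ∈ U (n + 1))) :
    ContractibleSpace X := by
  have hmono : Monotone U := monotone_nat_of_le_succ fun n => subset_closure.trans (hcl n)
  choose h hc h₀ hkill hfix hpres using
    fun n => exists_stage_homotopy hopen hcl hp₀ n (hcontr (2 * n + 1))
  let F := seqConcat (seqStage h)
  have hF : Continuous F := continuous_seqConcat (continuous_seqStage hc) (seqStage_succ_zero h₀)
  have hF_end : ∀ x, ∀ᶠ q in 𝓝 x ×ˢ atTop, F q = p₀ := by
    intro x
    obtain ⟨N, hN⟩ := mem_iUnion.1 (hunion ▸ mem_univ x)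
    filter_upwards [prod_mem_prod ((hopen (2 * N)).mem_nhds (hmono (by omega) hN))
      (Ici_mem_atTop ((N : ℝ) + 1))] with ⟨y, s⟩ ⟨hy, hs⟩
    refine seqStage_eq_of_mem (V := fun n => U (2 * n)) hpres hkill hfix hy ?_ _
    exact Nat.le_floor (by exact_mod_cast hs)
  rw [contractible_iff_id_nullhomotopic]
  refine ⟨p₀, ⟨{ toFun := fun q => compressTime F p₀ q.swap
                 continuous_toFun := (continuous_compressTime hF hF_end).comp continuous_swap
                 map_zero_left := fun x => ?_
                 map_one_left := compressTime_one }⟩⟩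
  simp [compressTime_zero, F, seqConcat_of_nonpos, seqStage, seqComp, h₀]
end

section
/- Let X be a completely regular topological space and let W ⊆ U_1 ⊆ U_2 be open subsets of X. If W contracts to a point p_0 ∈ W within U_1 fixing p_0, and U_1 contracts to some point within U_2, then U_1 contracts to p_0 within U_2 fixing p_0. -/
/-!
Cut the contraction `f` of `W` off by a function `ρ` that is supported in `W` and equal
to `1` near `p₀`: this deforms the inclusion of `U₁`, keeping `p₀` fixed, into a map `r`
that is constantly `p₀` near `p₀`. Then contract `r` with `g`, but only up to a time `c x`
which is `0` at `p₀` and `1` wherever `r x ≠ p₀`, and come back along the track of `p₀`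
under `g`, stopped at the same time. The two halves meet, and `p₀` never moves.
-/

open unitInterval Set

namespace ContinuousMap.Homotopy

variable {X Y : Type*} [TopologicalSpace X] [TopologicalSpace Y] {f₀ f₁ : C(X, Y)}

def atTimes (F : Homotopy f₀ f₁) (c : C(X, I)) : C(X, Y) where
  toFun x := F (c x, x)

def stopAt (F : Homotopy f₀ f₁) (c : C(X, I)) (S : Set X) (hcS : ∀ x ∈ S, c x = 0) :
    HomotopyRel f₀ (F.atTimes c) S where
  toFun p := F (p.1 * c p.2, p.2)
  map_zero_left x := by simp
  map_one_left x := by simp [atTimes]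
  prop' t x hx := by simp [hcS x hx]

variable {Z : Type*} [TopologicalSpace Z] {f : C(X, Y)} {y : Y}

theorem homotopicRel_comp_const_of_eq_of_ne_one (G : Homotopy f (const X y)) {r : C(Z, X)}
    {x₀ : X} {c : C(Z, I)} (hrc : ∀ z, c z ≠ 1 → r z = x₀) {S : Set Z}
    (hcS : ∀ z ∈ S, c z = 0) : HomotopicRel (f.comp r) (const Z (f x₀)) S := by
  -- where `c z = 1` both stopped homotopies have reached `y`; elsewhere `r z = x₀`
  have hmid :
      (G.compContinuousMap r).atTimes c = (G.compContinuousMap (const Z x₀)).atTimes c := by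
    ext z
    by_cases hz : c z = 1
    · simp [atTimes, hz]
    · simp [atTimes, hrc z hz]
  exact ⟨((G.compContinuousMap r).stopAt c S hcS).trans
    (((G.compContinuousMap (const Z x₀)).stopAt c S hcS).symm.cast hmid.symm
      (comp_const f x₀))⟩

end ContinuousMap.Homotopy

section CutoffExtend

variable {Y Z : Type*} {V : Set Y}

open Classical in
noncomputable def cutoffExtend (k : V × I → Z) (e : Y → Z) (ρ : Y → I) (p : Y × I) : Z :=
  if h : p.1 ∈ V then k (⟨p.1, h⟩, ρ p.1 * p.2) else e p.1

variable {k : V × I → Z} {e : Y → Z} {ρ : Y → I}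

theorem cutoffExtend_of_mem {y : Y} (hy : y ∈ V) (t : I) :
    cutoffExtend k e ρ (y, t) = k (⟨y, hy⟩, ρ y * t) :=
  dif_pos hy

theorem cutoffExtend_of_mul_eq_zero (hke : ∀ v, k (v, 0) = e v) {y : Y} {t : I}
    (hρ : ρ y * t = 0) : cutoffExtend k e ρ (y, t) = e y := by
  unfold cutoffExtend
  split_ifs with h
  · simpa [hρ] using hke ⟨y, h⟩
  · rfl

theorem continuous_cutoffExtend [TopologicalSpace Y] [TopologicalSpace Z] (hV : IsOpen V)
    (hk : Continuous k) (he : Continuous e) (hke : ∀ v, k (v, 0) = e v) (hρ : Continuous ρ)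
    (hρV : tsupport ρ ⊆ V) : Continuous (cutoffExtend k e ρ) := by
  have on_V : ContinuousOn (cutoffExtend k e ρ) (Prod.fst ⁻¹' V) := by
    rw [continuousOn_iff_continuous_domRestrict]
    have : (Prod.fst ⁻¹' V).domRestrict (cutoffExtend k e ρ) =
        fun p => k (⟨p.1.1, p.2⟩, ρ p.1.1 * p.1.2) := funext fun p => dif_pos p.2
    rw [this]
    fun_prop
  have off_tsupport : ContinuousOn (cutoffExtend k e ρ) (Prod.fst ⁻¹' (tsupport ρ)ᶜ) :=
    (he.comp continuous_fst).continuousOn.congr fun p hp =>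
      cutoffExtend_of_mul_eq_zero hke (by simp [image_eq_zero_of_notMem_tsupport hp])
  have cover : Prod.fst ⁻¹' V ∪ Prod.fst ⁻¹' (tsupport ρ)ᶜ = (univ : Set (Y × I)) :=
    eq_univ_of_forall fun p => (em (p.1 ∈ tsupport ρ)).imp (fun h => hρV h) id
  rw [← continuousOn_univ, ← cover]
  exact on_V.union_of_isOpen off_tsupport (hV.preimage continuous_fst)
    ((isClosed_tsupport ρ).isOpen_compl.preimage continuous_fst)

theorem homotopicRel_id_cutoffExtend [TopologicalSpace Y] (hV : IsOpen V) {k : V × I → Y}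
    (hk : Continuous k) (hk0 : ∀ v, k (v, 0) = v) {U : Set Y} (hkU : ∀ z, k z ∈ U)
    (hρ : Continuous ρ) (hρV : tsupport ρ ⊆ V) {S : Set U}
    (hS : ∀ x ∈ S, ∀ t, cutoffExtend k id ρ (x, t) = x) :
    ∃ r : C(U, U), (∀ x, (r x : Y) = cutoffExtend k id ρ (x, 1)) ∧
      (ContinuousMap.id U).HomotopicRel r S := by
  have hF := continuous_cutoffExtend hV hk continuous_id hk0 hρ hρV
  have hFU (x : U) (t : I) : cutoffExtend k id ρ (x, t) ∈ U := by
    unfold cutoffExtend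
    split_ifs
    exacts [hkU _, x.2]
  refine ⟨⟨fun x => ⟨cutoffExtend k id ρ (x, 1), hFU x 1⟩, by fun_prop⟩, fun x => rfl,
    ⟨{ toFun := fun p => ⟨cutoffExtend k id ρ (p.2, p.1), hFU _ _⟩
       map_zero_left := fun x => Subtype.ext (cutoffExtend_of_mul_eq_zero hk0 (mul_zero _))
       map_one_left := fun x => rfl
       prop' := fun t x hx => Subtype.ext (hS x hx t) }⟩⟩

end CutoffExtend

theorem exists_tsupport_subset_eqOn_one {X : Type*} [TopologicalSpace X]
    [CompletelyRegularSpace X] {W : Set X} (hW : IsOpen W) {p : X} (hp : p ∈ W) :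
    ∃ ρ : X → I, Continuous ρ ∧ tsupport ρ ⊆ W ∧ ∃ N, IsOpen N ∧ p ∈ N ∧ EqOn ρ 1 N := by
  obtain ⟨u, hu, hup, huW⟩ := CompletelyRegularSpace.completely_regular_isOpen p W hW hp
  set ρ : X → I := fun x => projIcc 0 1 zero_le_one (2 - 3 * (u x : ℝ))
  have supp : tsupport ρ ⊆ {x | (u x : ℝ) ≤ 2 / 3} := by
    refine closure_minimal (fun x hx => show (u x : ℝ) ≤ 2 / 3 from ?_)
      (isClosed_le (by fun_prop) continuous_const)
    by_contra! h
    exact hx (projIcc_eq_left zero_lt_one |>.mpr (by linarith))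
  refine ⟨ρ, by fun_prop, fun x hx => by_contra fun hxW => ?_, {x | (u x : ℝ) < 1 / 3},
    isOpen_lt (by fun_prop) continuous_const, by simp [hup], fun x hx => ?_⟩
  · have := supp hx
    norm_num [huW hxW] at this
  · exact projIcc_eq_right zero_lt_one |>.mpr (by linarith [hx.out])

theorem contraction_upgrade_fixing_point_general
    {X : Type*} [TopologicalSpace X] [CompletelyRegularSpace X]
    (W U₁ U₂ : Set X) (hW : IsOpen W)
    (hWU₁ : W ⊆ U₁) (hU₁U₂ : U₁ ⊆ U₂)
    (p₀ : X) (hp₀ : p₀ ∈ W)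
    (f : W × I → X) (hf : Continuous f)
    (hf0 : ∀ x : W, f (x, 0) = (x : X))
    (hf1 : ∀ x : W, f (x, 1) = p₀)
    (hfp : ∀ t : I, f (⟨p₀, hp₀⟩, t) = p₀)
    (hfU₁ : ∀ z, f z ∈ U₁)
    (g : U₁ × I → X) (hg : Continuous g)
    (hg0 : ∀ x : U₁, g (x, 0) = (x : X))
    (hg1 : ∃ q : X, ∀ x : U₁, g (x, 1) = q)
    (hgU₂ : ∀ z, g z ∈ U₂) :
    ∃ h : U₁ × I → X, Continuous h ∧
      (∀ x : U₁, h (x, 0) = (x : X)) ∧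
      (∀ x : U₁, h (x, 1) = p₀) ∧
      (∀ t : I, h (⟨p₀, hWU₁ hp₀⟩, t) = p₀) ∧
      (∀ z, h z ∈ U₂) := by
  obtain ⟨q, hq⟩ := hg1
  set P₀ : U₁ := ⟨p₀, hWU₁ hp₀⟩
  obtain ⟨ρ, hρ, hρW, N, hN, hp₀N, hρN⟩ := exists_tsupport_subset_eqOn_one hW hp₀
  obtain ⟨c, hc, hcp₀, hcN⟩ := CompletelyRegularSpace.completely_regular_isOpen p₀ N hN hp₀N
  obtain ⟨r, hr, cutoff⟩ := homotopicRel_id_cutoffExtend hW hf hf0 hfU₁ hρ hρW (S := {P₀})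
    (by rintro _ rfl t; exact (cutoffExtend_of_mem hp₀ _).trans (hfp _))
  let ι : C(U₁, U₂) := ⟨inclusion hU₁U₂, continuous_inclusion hU₁U₂⟩
  let G : ContinuousMap.Homotopy ι (.const U₁ ⟨q, hq P₀ ▸ hgU₂ _⟩) :=
    { toFun := fun p => ⟨g (p.2, p.1), hgU₂ _⟩
      map_zero_left := fun x => Subtype.ext (hg0 x)
      map_one_left := fun x => Subtype.ext (hq x) }
  have contract : (ι.comp r).HomotopicRel (.const U₁ (ι P₀)) {P₀} := by
    refine G.homotopicRel_comp_const_of_eq_of_ne_one (r := r)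
      (c := ⟨fun x => c x, by fun_prop⟩) (fun x hx => Subtype.ext ?_) (by simpa using hcp₀)
    have hxN : (x : X) ∈ N := by_contra fun h => hx (hcN h)
    have hxW : (x : X) ∈ W := hρW (subset_tsupport _ (by simp [hρN hxN]))
    simpa [hr, cutoffExtend_of_mem hxW, hρN hxN] using hf1 _
  obtain ⟨H⟩ := (cutoff.comp_continuousMap ι).trans contract
  exact ⟨fun z => H (z.2, z.1), by fun_prop, fun x => congrArg Subtype.val (H.apply_zero x),
    fun x => congrArg Subtype.val (H.apply_one x),
    fun t => congrArg Subtype.val (H.eq_fst t rfl), fun z => (H _).2⟩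

/-- **Lemma 5.** If `W ⊆ U₁ ⊆ U₂` are open subsets of a completely regular space `X` and
`W` contracts to a point `p₀ ∈ W` in `U₁` fixing `p₀`, and `U₁` contracts to a point in
`U₂`, then `U₁` contracts to `p₀` in `U₂` fixing `p₀`. -/
theorem contraction_upgrade_fixing_point
    {X : Type*} [TopologicalSpace X] [CompletelyRegularSpace X]
    (W U₁ U₂ : Set X) (hW : IsOpen W) (hU₁ : IsOpen U₁) (hU₂ : IsOpen U₂)
    (hWU₁ : W ⊆ U₁) (hU₁U₂ : U₁ ⊆ U₂)
    (p₀ : X) (hp₀ : p₀ ∈ W)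
    (f : W × I → X) (hf : Continuous f)
    (hf0 : ∀ x : W, f (x, 0) = (x : X))
    (hf1 : ∀ x : W, f (x, 1) = p₀)
    (hfp : ∀ t : I, f (⟨p₀, hp₀⟩, t) = p₀)
    (hfU₁ : ∀ z, f z ∈ U₁)
    (g : U₁ × I → X) (hg : Continuous g)
    (hg0 : ∀ x : U₁, g (x, 0) = (x : X))
    (hg1 : ∃ q : X, ∀ x : U₁, g (x, 1) = q)
    (hgU₂ : ∀ z, g z ∈ U₂) :
    ∃ h : U₁ × I → X, Continuous h ∧
      (∀ x : U₁, h (x, 0) = (x : X)) ∧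
      (∀ x : U₁, h (x, 1) = p₀) ∧
      (∀ t : I, h (⟨p₀, hWU₁ hp₀⟩, t) = p₀) ∧
      (∀ z, h z ∈ U₂) :=
  contraction_upgrade_fixing_point_general W U₁ U₂ hW hWU₁ hU₁U₂ p₀ hp₀ f hf hf0 hf1 hfp hfU₁ g hg
    hg0 hg1 hgU₂
end

section
/- Suppose h : X × [0,∞) → X is continuous with h(x,0) = x for all x, and A ⊆ X × [1,∞) is a set such that h is constant on each horizontal slice of A (i.e., h(A ∩ (X × {t})) is a single point for each t ≥ 1). If σ : X → [3,∞) is continuous with graph contained in A, and there exists q ∈ X with {q} × [3,∞) ⊆ A, then the map ψ(x) = h(x, σ(x)) satisfies ψ = τ ∘ σ where τ(t) = h(q,t), and ψ is homotopic to the identity of X; consequently X is contractible. -/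
open unitInterval ContinuousMap

/-
Both `id = h(·, 0)` and `ψ = h(·, σ(·))` are `h` composed with a graph map `x ↦ (x, f x)` into
`X × [0,∞)`; since `[0,∞)` is contractible, `f = 0` and `f = σ` are homotopic, hence so are `id`
and `ψ`. The slice condition gives `ψ = τ ∘ σ`, a map factoring through the contractible `[0,∞)`,
so `ψ`, and with it `id`, is nullhomotopic.
-/

section

variable {X Y Z : Type*} [TopologicalSpace X] [TopologicalSpace Y] [TopologicalSpace Z]

theorem ContinuousMap.homotopic_of_contractibleSpace [ContractibleSpace Y] (f g : C(X, Y)) :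
    f.Homotopic g := by
  obtain ⟨c, hc⟩ := id_nullhomotopic Y
  have homotopic_const (f : C(X, Y)) : f.Homotopic (const X c) := by
    simpa using hc.comp (Homotopic.refl f)
  exact (homotopic_const f).trans (homotopic_const g).symm

theorem ContinuousMap.nullhomotopic_of_contractibleSpace [ContractibleSpace Y] [Nonempty Y]
    (f : C(X, Y)) : f.Nullhomotopic :=
  ⟨Classical.arbitrary Y, homotopic_of_contractibleSpace _ _⟩

theorem ContinuousMap.homotopic_comp_prodMk_of_contractibleSpace [ContractibleSpace Y]
    (H : C(X × Y, Z)) (f g : C(X, Y)) :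
    (H.comp ((ContinuousMap.id X).prodMk f)).Homotopic
      (H.comp ((ContinuousMap.id X).prodMk g)) :=
  (Homotopic.refl H).comp ((Homotopic.refl _).prodMk (homotopic_of_contractibleSpace f g))

end

instance : ContractibleSpace (Set.Ici (0 : ℝ)) :=
  (convex_Ici 0).contractibleSpace Set.nonempty_Ici

/-- If `h : X × [0,∞) → X` starts at the identity and is constant on each horizontal
slice of a set `A ⊆ X × [1,∞)`, and `σ : X → [3,∞)` is continuous with graph in `A`,
and `{q} × [3,∞) ⊆ A`, then `ψ(x) = h(x, σ(x))` factors as `τ ∘ σ` with `τ(t) = h(q,t)`,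
`ψ` is homotopic to `id_X`, and `X` is contractible. -/
theorem contractible_of_slicewise_constant_homotopy
    {X : Type*} [TopologicalSpace X]
    (h : X × (Set.Ici (0 : ℝ)) → X) (hh : Continuous h)
    (hh0 : ∀ x : X, h (x, ⟨0, Set.self_mem_Ici⟩) = x)
    (A : Set (X × ℝ))
    (hslice : ∀ (t : ℝ) (ht : 1 ≤ t), ∀ x y : X, (x, t) ∈ A → (y, t) ∈ A →
      h (x, ⟨t, le_trans zero_le_one ht⟩) = h (y, ⟨t, le_trans zero_le_one ht⟩))
    (sig : X → ℝ) (hsig : Continuous sig) (hsig3 : ∀ x, 3 ≤ sig x)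
    (hgraph : ∀ x, (x, sig x) ∈ A)
    (q : X) (hq : ∀ t : ℝ, 3 ≤ t → (q, t) ∈ A) :
    (∀ x : X, h (x, ⟨sig x, le_trans (by norm_num) (hsig3 x)⟩) =
      h (q, ⟨sig x, le_trans (by norm_num) (hsig3 x)⟩)) ∧
    (∃ k : X × I → X, Continuous k ∧ (∀ x, k (x, 0) = x) ∧
      (∀ x, k (x, 1) = h (x, ⟨sig x, le_trans (by norm_num) (hsig3 x)⟩))) ∧
    ContractibleSpace X := by
  have hfactor x : h (x, ⟨sig x, le_trans (by norm_num) (hsig3 x)⟩) =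
      h (q, ⟨sig x, le_trans (by norm_num) (hsig3 x)⟩) :=
    hslice _ (by linarith [hsig3 x]) x q (hgraph x) (hq _ (hsig3 x))
  let H : C(X × Set.Ici (0 : ℝ), X) := ⟨h, hh⟩
  let s : C(X, Set.Ici (0 : ℝ)) :=
    ⟨fun x => ⟨sig x, le_trans (by norm_num) (hsig3 x)⟩, hsig.subtype_mk _⟩
  let ψ : C(X, X) := H.comp ((ContinuousMap.id X).prodMk s)
  have hid : H.comp ((ContinuousMap.id X).prodMk (const X ⟨0, Set.self_mem_Ici⟩)) =
      ContinuousMap.id X := ContinuousMap.ext hh0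
  have hψ : (ContinuousMap.id X).Homotopic ψ := by
    simpa only [hid] using
      homotopic_comp_prodMk_of_contractibleSpace H (const X ⟨0, Set.self_mem_Ici⟩) s
  let F := hψ.some
  refine ⟨hfactor, ⟨fun p => F (p.2, p.1), by fun_prop, F.apply_zero, F.apply_one⟩, ?_⟩
  let τ : C(Set.Ici (0 : ℝ), X) := H.comp ((const _ q).prodMk (ContinuousMap.id _))
  have hψτ : ψ = τ.comp s := ContinuousMap.ext hfactor
  obtain ⟨c, hc⟩ := (nullhomotopic_of_contractibleSpace s).comp_right τ
  exact (contractible_iff_id_nullhomotopic X).mpr ⟨c, hψ.trans (hψτ ▸ hc)⟩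
end

section
/- There exists a contractible metric space X and a point p ∈ X such that X cannot be contracted to p fixing p; that is, there is no homotopy f : X × [0,1] → X with f(x,0) = x, f(x,1) = p for all x, and f(p,t) = p for all t. (For example, the line of Cantor fans with p any cone vertex fails to contract fixing certain points.) -/
open unitInterval Filter Topology

/-!
The comb space `C = T × [0,1] ∪ [0,1] × {0}`, with teeth at `T = {0} ∪ {1/(n+1)}`, is contractible:
push the teeth down onto the base, then slide the base to the origin. But it cannot be contracted
to `p = (0,1)` keeping `p` fixed. By the tube lemma, points close enough to `p` stay in the upper half
plane during the whole homotopy; in particular the track of a tooth tip `(1/(n+1), 1)` for large `n`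
never meets the base. A path in `C` off the base has its first coordinate in the countable set `T`, so
that coordinate is constant, while the track must end at `p`, whose first coordinate is `0 ≠ 1/(n+1)`.
-/

theorem Continuous.eventually_forall_apply_mem {X Y K : Type*} [TopologicalSpace X]
    [TopologicalSpace Y] [TopologicalSpace K] [CompactSpace K] {f : X × K → Y} (hf : Continuous f)
    {p : X} {V : Set Y} (hV : ∀ t, V ∈ 𝓝 (f (p, t))) :
    ∀ᶠ x in 𝓝 p, ∀ t, f (x, t) ∈ V := by
  simpa using isCompact_univ.eventually_forall_of_forall_eventually (P := fun x t ↦ f (x, t) ∈ V)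
    fun t _ ↦ hf.continuousAt.preimage_mem_nhds (hV t)

def combTeeth : Set ℝ := insert 0 (Set.range fun n : ℕ ↦ 1 / ((n : ℝ) + 1))

def comb : Set (ℝ × ℝ) := combTeeth ×ˢ Set.Icc 0 1 ∪ Set.Icc 0 1 ×ˢ {0}

lemma combTeeth_countable : combTeeth.Countable := (Set.countable_range _).insert 0

lemma combTeeth_subset_Icc : combTeeth ⊆ Set.Icc 0 1 := by
  rintro _ (rfl | ⟨n, rfl⟩)
  · exact Set.left_mem_Icc.2 zero_le_one
  · exact ⟨by positivity, div_le_one_of_le₀ (by simp) (by positivity)⟩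

lemma mk_mem_comb {x y : ℝ} (hx : x ∈ combTeeth) (hy : y ∈ Set.Icc 0 1) : (x, y) ∈ comb :=
  Or.inl ⟨hx, hy⟩

lemma mk_mul_mem_comb {a b : ℝ} (ha : a ∈ I) (hb : b ∈ I) (hab : b ≠ 0 → a = 1) {q : ℝ × ℝ}
    (hq : q ∈ comb) : (a * q.1, b * q.2) ∈ comb := by
  rcases hq with ⟨hx, hy⟩ | ⟨hx, hy⟩
  · by_cases hb0 : b = 0
    · exact Or.inr ⟨mul_mem ha (combTeeth_subset_Icc hx), by simp [hb0]⟩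
    · rw [hab hb0, one_mul]
      exact mk_mem_comb hx (mul_mem hb hy)
  · exact Or.inr ⟨mul_mem ha hx, by simp_all⟩

instance comb.contractibleSpace : ContractibleSpace comb := by
  rw [contractible_iff_id_nullhomotopic]
  refine ⟨⟨(0, 0), mk_mem_comb (Set.mem_insert 0 _) (Set.left_mem_Icc.2 zero_le_one)⟩, ⟨?_⟩⟩
  have hscale (t : I) : min 1 (2 - 2 * (t : ℝ)) ∈ I ∧ max 0 (1 - 2 * (t : ℝ)) ∈ I ∧
      (max 0 (1 - 2 * (t : ℝ)) ≠ 0 → min 1 (2 - 2 * (t : ℝ)) = 1) := by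
    obtain ⟨ht0, ht1⟩ := t.2
    refine ⟨⟨le_min zero_le_one (by linarith), min_le_left _ _⟩,
      ⟨le_max_left _ _, max_le zero_le_one (by linarith)⟩, fun hb ↦ min_eq_left ?_⟩
    have : 0 < 1 - 2 * (t : ℝ) := by
      by_contra! h
      exact hb (max_eq_left h)
    linarith
  -- `(x, y) ↦ (x, (1 - 2t) y)` for `t ≤ 1/2`, then `(x, y) ↦ ((2 - 2t) x, 0)` for `t ≥ 1/2`
  exact
    { toFun := fun z ↦ ⟨(min 1 (2 - 2 * (z.1 : ℝ)) * z.2.1.1, max 0 (1 - 2 * (z.1 : ℝ)) * z.2.1.2),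
        mk_mul_mem_comb (hscale z.1).1 (hscale z.1).2.1 (hscale z.1).2.2 z.2.2⟩
      continuous_toFun := by fun_prop
      map_zero_left := fun x ↦ by ext <;> norm_num
      map_one_left := fun x ↦ by ext <;> norm_num }

lemma fst_eq_of_forall_snd_ne_zero {X : Type*} [TopologicalSpace X] [PreconnectedSpace X]
    {γ : X → comb} (hγ : Continuous γ) (hsnd : ∀ t, (γ t : ℝ × ℝ).2 ≠ 0) (s t : X) :
    (γ s : ℝ × ℝ).1 = (γ t : ℝ × ℝ).1 :=
  combTeeth_countable.isTotallyDisconnected _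
    (Set.range_subset_iff.2 fun t ↦ ((γ t).2.resolve_right fun h ↦ hsnd t h.2).1)
    (isPreconnected_range (by fun_prop)) ⟨s, rfl⟩ ⟨t, rfl⟩

def combApex : comb := ⟨(0, 1), mk_mem_comb (Set.mem_insert 0 _) (Set.right_mem_Icc.2 zero_le_one)⟩

noncomputable def combToothTip (n : ℕ) : comb :=
  ⟨(1 / ((n : ℝ) + 1), 1), mk_mem_comb (Set.mem_insert_of_mem _ ⟨n, rfl⟩)
    (Set.right_mem_Icc.2 zero_le_one)⟩

lemma tendsto_combToothTip : Tendsto combToothTip atTop (𝓝 combApex) :=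
  tendsto_subtype_rng.2 <| tendsto_one_div_add_atTop_nhds_zero_nat.prodMk_nhds tendsto_const_nhds

/-- There is a contractible (metric) space `X` — a subspace of the plane — and a point
`p ∈ X` such that `X` cannot be contracted to `p` fixing `p`. -/
theorem exists_contractible_space_not_contractible_fixing_point :
    ∃ (X : Set (ℝ × ℝ)) (p : X), ContractibleSpace X ∧
      ¬ ∃ f : X × I → X, Continuous f ∧
          (∀ x : X, f (x, 0) = x) ∧
          (∀ x : X, f (x, 1) = p) ∧
          (∀ t : I, f (p, t) = p) := by
  refine ⟨comb, combApex, inferInstance, ?_⟩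
  rintro ⟨f, hf, hf0, hf1, hfp⟩
  have hupper : {z : comb | 0 < (z : ℝ × ℝ).2} ∈ 𝓝 combApex :=
    (isOpen_lt continuous_const (by fun_prop)).mem_nhds (by simp [combApex])
  obtain ⟨n, hn⟩ := (tendsto_combToothTip.eventually
    (hf.eventually_forall_apply_mem fun t ↦ (hfp t).symm ▸ hupper)).exists
  have htrack := fst_eq_of_forall_snd_ne_zero (γ := fun t ↦ f (combToothTip n, t))
    (by fun_prop) (fun t ↦ (hn t).ne') 0 1
  simp [hf0, hf1, combApex, combToothTip, Nat.cast_add_one_ne_zero] at htrack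
end
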